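/- arXiv:2209.13373 — 2 statements merged into one kernel-verified Lean document; each statement's English description precedes it below -/
import Mathlib

section
/- The XOR cellular automaton f : {0,1}^ℤ → {0,1}^ℤ defined by f(x)_i = 1 if and only if x_i + x_{i+1} ≡ 1 (mod 2) is not von Neumann regular in End({0,1}^ℤ). -/
/-- The shift map on the full shift `A^ℤ`: `σ(x)_i = x_{i+1}`. -/
def shiftMap {A : Type*} (x : ℤ → A) : ℤ → A := fun i => x (i + 1)

/-- A cellular automaton on the full shift `A^ℤ` (with the product topology,
`A` discrete): a continuous map commuting with the shift. -/
def IsCA {A : Type*} [TopologicalSpace A] (f : (ℤ → A) → (ℤ → A)) : Prop :=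
  Continuous f ∧ ∀ x, f (shiftMap x) = shiftMap (f x)

/-- `f` is von Neumann regular in the monoid `End(A^ℤ)` of cellular automata:
there is a CA `h` with `f ∘ h ∘ f = f` and `h ∘ f ∘ h = h`. -/
def IsRegularCA {A : Type*} [TopologicalSpace A] (f : (ℤ → A) → (ℤ → A)) : Prop :=
  ∃ h : (ℤ → A) → (ℤ → A), IsCA h ∧ f ∘ h ∘ f = f ∧ h ∘ f ∘ h = h

/-!
Suppose `h` is a CA with `f ∘ h ∘ f = f`. Since `f` maps the Heaviside step `1_{[1,∞)}` to the
unit impulse `δ`, `x := h δ` satisfies `f x = δ`, so `x` is a step function, constant on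
`(-∞, 0]` and on `[1, ∞)` with two different values. On the other hand `x k = h (σ^k δ) 0`, and
the translates `σ^k δ` tend to the zero configuration as `|k| → ∞`, so by continuity `x k` equals
the single symbol `h 0 0` for all but finitely many `k`, in both directions.
-/

open Filter Topology

def shiftBy {A : Type*} (y : ℤ → A) (k : ℤ) : ℤ → A := fun j => y (j + k)

theorem shiftBy_add_one {A : Type*} (y : ℤ → A) (k : ℤ) :
    shiftBy y (k + 1) = shiftMap (shiftBy y k) := by
  funext j
  simp only [shiftBy, shiftMap]
  ring_nf

theorem IsCA.apply_shiftBy {A : Type*} [TopologicalSpace A] {h : (ℤ → A) → (ℤ → A)}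
    (hh : IsCA h) (y : ℤ → A) (k i : ℤ) : h (shiftBy y k) i = h y (i + k) := by
  induction k using Int.induction_on generalizing i with
  | zero => rw [show shiftBy y 0 = y from funext fun j => by simp [shiftBy], add_zero]
  | succ k ih => rw [shiftBy_add_one, hh.2, shiftMap, ih, add_right_comm, add_assoc]
  | pred k ih =>
    have key := ih (i - 1)
    rw [← sub_add_cancel (-(k : ℤ)) 1, shiftBy_add_one, hh.2, shiftMap, sub_add_cancel] at key
    rw [key]
    ring_nf

theorem IsCA.eventually_apply_eq {A : Type*} [TopologicalSpace A] [DiscreteTopology A]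
    {h : (ℤ → A) → (ℤ → A)} (hh : IsCA h) {y z : ℤ → A}
    (hy : Tendsto (shiftBy y) cofinite (𝓝 z)) : ∀ᶠ k in cofinite, h y k = h z 0 := by
  have hlim := ((continuous_apply 0).tendsto (h z)).comp ((hh.1.tendsto z).comp hy)
  rw [nhds_discrete, tendsto_pure] at hlim
  filter_upwards [hlim] with k hk
  simpa [hh.apply_shiftBy] using hk

def unitImpulse : ℤ → Bool := fun i => decide (i = 0)

theorem tendsto_shiftBy_unitImpulse :
    Tendsto (shiftBy unitImpulse) cofinite (𝓝 fun _ => false) := by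
  rw [tendsto_pi_nhds]
  intro j
  rw [nhds_discrete, tendsto_pure]
  filter_upwards [eventually_cofinite_ne (-j)] with k hk
  simp only [shiftBy, unitImpulse, decide_eq_false_iff_not]
  omega

def xorCA (x : ℤ → Bool) : ℤ → Bool := fun i => xor (x i) (x (i + 1))

theorem xorCA_heaviside : xorCA (fun i => decide (1 ≤ i)) = unitImpulse := by
  funext i
  simp only [xorCA, unitImpulse]
  rcases lt_trichotomy i 0 with hi | rfl | hi
  · simp [show ¬ 1 ≤ i by omega, show ¬ 1 ≤ i + 1 by omega, hi.ne]
  · simp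
  · simp [show 1 ≤ i by omega, show 1 ≤ i + 1 by omega, hi.ne']

theorem not_eventually_const_of_xorCA_eq_unitImpulse {x : ℤ → Bool}
    (hx : xorCA x = unitImpulse) (c : Bool) : ¬ ∀ᶠ k in cofinite, x k = c := by
  have hstep : ∀ i ≠ 0, x (i + 1) = x i := by
    intro i hi
    have := congrFun hx i
    simp only [xorCA, unitImpulse, hi, decide_false, bne_eq_false_iff_eq] at this
    exact this.symm
  have hjump : x 1 ≠ x 0 := by
    have := congrFun hx 0
    simp only [xorCA, unitImpulse, decide_true, zero_add, bne_iff_ne] at this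
    exact this.symm
  have hleft : ∀ i ≤ 0, x i = x 0 := by
    intro i hi
    induction i, hi using Int.leInductionDown with
    | base => rfl
    | pred n hn ih => rw [← ih, ← hstep (n - 1) (by omega), sub_add_cancel]
  have hright : ∀ i ≥ 1, x i = x 1 := by
    intro i hi
    induction i, hi using Int.leInduction with
    | base => rfl
    | succ n hn ih => rw [hstep n (by omega), ih]
  intro hc
  rw [Int.cofinite_eq, eventually_sup] at hc
  obtain ⟨i, hxi, hi⟩ := (hc.1.and (eventually_le_atBot 0)).exists
  obtain ⟨j, hxj, hj⟩ := (hc.2.and (eventually_ge_atTop 1)).exists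
  exact hjump (by rw [← hright j hj, hxj, ← hxi, hleft i hi])

/-- The XOR cellular automaton `f(x)_i = 1 ↔ x_i + x_{i+1} ≡ 1 (mod 2)` is not
von Neumann regular in `End({0,1}^ℤ)`. -/
theorem stmt5 (f : (ℤ → Bool) → (ℤ → Bool))
    (hf : ∀ (x : ℤ → Bool) (i : ℤ),
      f x i = true ↔ ((x i).toNat + (x (i + 1)).toNat) % 2 = 1) :
    ¬ IsRegularCA f := by
  rintro ⟨h, hh, hfhf, -⟩
  have hf_eq : f = xorCA := by
    funext x i
    rw [Bool.eq_iff_iff, hf, xorCA]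
    cases x i <;> cases x (i + 1) <;> decide
  have hpre : xorCA (h unitImpulse) = unitImpulse := by
    simpa [Function.comp, hf_eq, xorCA_heaviside] using congrFun hfhf fun i => decide (1 ≤ i)
  exact not_eventually_const_of_xorCA_eq_unitImpulse hpre _
    (IsCA.eventually_apply_eq hh tendsto_shiftBy_unitImpulse)
end

section
/- Let X be a mixing subshift of finite type and f : X → X a surjective cellular automaton. Then f is injective if and only if f is von Neumann regular in End(X). -/
/-- A subshift: a closed, shift-invariant subset of the full shift. -/
def IsSubshift {A : Type*} [TopologicalSpace A] (X : Set (ℤ → A)) : Prop :=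
  IsClosed X ∧ shiftMap '' X = X

/-- The finite word `w` occurs as a subword of the bi-infinite sequence `x`. -/
def occursIn {A : Type*} (w : List A) (x : ℤ → A) : Prop :=
  ∃ i : ℤ, ∀ k : Fin w.length, x (i + (k.val : ℤ)) = w.get k

/-- A subshift of finite type: the set of points avoiding a finite set `F` of
forbidden finite words. -/
def IsSFT {A : Type*} (X : Set (ℤ → A)) : Prop :=
  ∃ F : Set (List A), F.Finite ∧ X = {x | ∀ w ∈ F, ¬ occursIn w x}

/-- The language of a subshift: the finite words occurring in its points. -/
def lang {A : Type*} (X : Set (ℤ → A)) : Set (List A) :=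
  {w | ∃ x ∈ X, occursIn w x}

/-- `X` is mixing: for all words `u, v` in the language of `X` there is `N` such
that for every `n ≥ N` some word `u w v` with `|w| = n` is in the language. -/
def IsMixing {A : Type*} (X : Set (ℤ → A)) : Prop :=
  ∀ u ∈ lang X, ∀ v ∈ lang X, ∃ N : ℕ, ∀ n : ℕ, N ≤ n →
    ∃ w : List A, w.length = n ∧ (u ++ w ++ v) ∈ lang X

/-- A cellular automaton on the subshift `X`: a map `X → X` (presented as a map
of the ambient full shift restricted to `X`) that is continuous on `X` and
commutes with the shift on `X`. -/
def IsCAOn {A : Type*} [TopologicalSpace A] (X : Set (ℤ → A))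
    (f : (ℤ → A) → (ℤ → A)) : Prop :=
  Set.MapsTo f X X ∧ ContinuousOn f X ∧ ∀ x ∈ X, f (shiftMap x) = shiftMap (f x)

/-- `f` is von Neumann regular as an element of the monoid `End(X)` of cellular
automata on `X`: there is a CA `h` on `X` with `f∘h∘f = f` and `h∘f∘h = h` as
maps on `X`. -/
def IsRegularCAOn {A : Type*} [TopologicalSpace A] (X : Set (ℤ → A))
    (f : (ℤ → A) → (ℤ → A)) : Prop :=
  ∃ h : (ℤ → A) → (ℤ → A), IsCAOn X h ∧
    (∀ x ∈ X, f (h (f x)) = f x) ∧ (∀ x ∈ X, h (f (h x)) = h x)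

/-! If `f` is bijective on `X`, its inverse is continuous because `X` is compact, and it commutes
with the shift, so it is an inverse in `End(X)`. Conversely, if `f ∘ h ∘ f = f` and `f` is onto,
then `f ∘ h = id` on `X`, so `h` is an injective CA. Such an `h` permutes the finite set of points
of `X` of any given period, so its compact image contains the periodic points of `X`. These are
dense in a mixing SFT: if `u` is a long central block of a point and `u w u` occurs in `X`, the
periodic repetition of `u w` lies in `X`, since all its short windows are windows of `u w u`.
Hence `h` is onto and `f = h⁻¹` is injective. -/

open Function Set

section Shift

variable {A : Type*}

lemma shiftMap_iterate_apply (x : ℤ → A) (n : ℕ) (i : ℤ) : shiftMap^[n] x i = x (i + n) := by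
  induction n generalizing x with
  | zero => simp
  | succ n ih =>
    rw [iterate_succ_apply, ih]
    simp only [shiftMap, Nat.cast_succ, add_assoc]

lemma isPeriodicPt_shiftMap_iff {x : ℤ → A} {n : ℕ} :
    IsPeriodicPt shiftMap n x ↔ Periodic x (n : ℤ) := by
  simp only [IsPeriodicPt, IsFixedPt, funext_iff, shiftMap_iterate_apply, Periodic]

lemma Function.Periodic.apply_emod {x : ℤ → A} {n : ℤ} (hx : Periodic x n) (i : ℤ) :
    x (i % n) = x i := by
  rw [Int.emod_def, mul_comm]
  exact hx.sub_int_mul_eq _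

lemma finite_setOf_isPeriodicPt_shiftMap [Finite A] {n : ℕ} (hn : 0 < n) :
    {x : ℤ → A | IsPeriodicPt shiftMap n x}.Finite := by
  refine Finite.of_finite_image (f := fun x (k : Fin n) => x k) (toFinite _) ?_
  intro x hx y hy hxy
  funext i
  have hi : ((i % n).toNat : ℤ) = i % n := Int.toNat_of_nonneg (Int.emod_nonneg _ (by omega))
  have hlt : (i % n).toNat < n := by have := Int.emod_lt_of_pos i (by omega : (0 : ℤ) < n); omega
  have hxyi := congrFun hxy ⟨_, hlt⟩
  simp only [hi] at hxyi
  rwa [(isPeriodicPt_shiftMap_iff.mp hx).apply_emod, (isPeriodicPt_shiftMap_iff.mp hy).apply_emod]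
    at hxyi

end Shift

section Words

variable {A : Type*}

def window (x : ℤ → A) (a : ℤ) (L : ℕ) : List A := List.ofFn fun k : Fin L => x (a + k)

@[simp]
lemma length_window (x : ℤ → A) (a : ℤ) (L : ℕ) : (window x a L).length = L :=
  List.length_ofFn

lemma occursIn_iff_exists_window {w : List A} {x : ℤ → A} :
    occursIn w x ↔ ∃ i, window x i w.length = w := by
  conv_rhs => enter [1, i, 2]; rw [← List.ofFn_get w]
  simp only [occursIn, window, List.ofFn_inj, funext_iff]

lemma window_add (x : ℤ → A) (a : ℤ) (L L' : ℕ) :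
    window x a (L + L') = window x a L ++ window x (a + L) L' := by
  simp only [window, List.ofFn_add, Fin.val_castLE, Fin.val_natAdd, Nat.cast_add, add_assoc]

lemma apply_eq_of_window_eq {x y : ℤ → A} {a b : ℤ} {L : ℕ} (h : window x a L = window y b L)
    {k : ℕ} (hk : k < L) : x (a + k) = y (b + k) :=
  congrFun (List.ofFn_inj.mp h) ⟨k, hk⟩

end Words

lemma IsMixing.exists_mem_eqOn_translates {A : Type*} {X : Set (ℤ → A)} (hX : IsMixing X)
    {x : ℤ → A} (hx : x ∈ X) (c : ℕ) :
    ∃ z ∈ X, ∃ j : ℤ, ∃ n : ℕ, c ≤ n ∧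
      ∀ s : ℤ, -c ≤ s → s < c → z (j + s) = x s ∧ z (j + s + n) = x s := by
  set u := window x (-c) (2 * c)
  have hu : u ∈ lang X := ⟨x, hx, occursIn_iff_exists_window.mpr ⟨-c, by simp [u]⟩⟩
  obtain ⟨N, hN⟩ := hX u hu u hu
  obtain ⟨w, rfl, z, hz, huwu⟩ := hN N le_rfl
  obtain ⟨i, hi⟩ := occursIn_iff_exists_window.mp huwu
  have hlen : (u ++ w ++ u).length = (2 * c + w.length) + 2 * c := by simp [u]; omega
  rw [hlen, window_add] at hi
  obtain ⟨huw, hsecond⟩ := List.append_inj hi (by simp [u])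
  rw [window_add] at huw
  have hfirst := List.append_inj_left huw (by simp [u])
  refine ⟨z, hz, i + c, 2 * c + w.length, by omega, fun s hs₁ hs₂ => ?_⟩
  obtain ⟨k, hk⟩ : ∃ k : ℕ, s + c = k := ⟨(s + c).toNat, by omega⟩
  have hkc : k < 2 * c := by omega
  constructor
  · convert apply_eq_of_window_eq hfirst hkc using 2 <;> omega
  · convert apply_eq_of_window_eq hsecond hkc using 2 <;> push_cast <;> omega

lemma IsSFT.exists_mem_of_forall_occursIn {A : Type*} {X : Set (ℤ → A)} (hX : IsSFT X) :
    ∃ M : ℕ, ∀ p z : ℤ → A, z ∈ X →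
      (∀ w : List A, w.length ≤ M → occursIn w p → occursIn w z) → p ∈ X := by
  obtain ⟨F, hF, rfl⟩ := hX
  obtain ⟨M, hM⟩ := (hF.image List.length).bddAbove
  exact ⟨M, fun p z hz hpz w hw hwp => hz w hw (hpz w (hM (mem_image_of_mem _ hw)) hwp)⟩

section Periodize

variable {A : Type*}

def periodize (z : ℤ → A) (j : ℤ) (n : ℕ) : ℤ → A := fun i => z (j + i % n)

lemma periodize_periodic (z : ℤ → A) (j : ℤ) (n : ℕ) : Periodic (periodize z j n) n := by
  intro i
  simp only [periodize, Int.add_emod_right]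

variable {z : ℤ → A} {j : ℤ} {n c : ℕ}

lemma periodize_apply_of_eq (hz : ∀ s : ℤ, -c ≤ s → s < c → z (j + s + n) = z (j + s))
    (hcn : c ≤ n) {i : ℤ} (hi₁ : -c ≤ i) (hi₂ : i < n + c) : periodize z j n i = z (j + i) := by
  simp only [periodize]
  rcases lt_or_ge i 0 with hneg | hnonneg
  · have : i % n = i + n := by
      rw [← Int.add_emod_right, Int.emod_eq_of_lt (by omega) (by omega)]
    rw [this, ← add_assoc, hz i hi₁ (by omega)]
  rcases lt_or_ge i n with hlt | hge
  · rw [Int.emod_eq_of_lt hnonneg hlt]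
  · have : i % n = i - n := by
      rw [← Int.emod_eq_of_lt (a := i - n) (b := n) (by omega) (by omega),
        ← Int.add_emod_right (i - n), sub_add_cancel]
    rw [this, ← hz (i - n) (by omega) (by omega)]
    congr 1
    ring

lemma occursIn_of_occursIn_periodize
    (hz : ∀ s : ℤ, -c ≤ s → s < c → z (j + s + n) = z (j + s)) (hcn : c ≤ n) {w : List A}
    (hw : w.length ≤ c) (h : occursIn w (periodize z j n)) : occursIn w z := by
  obtain ⟨i, hi⟩ := h
  refine ⟨j + i % n, fun k => ?_⟩
  have hn : (0 : ℤ) < n := by have := k.isLt; omega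
  have hmod : periodize z j n (i + k) = periodize z j n (i % n + k) := by
    simp only [periodize, Int.emod_add_emod]
  have := Int.emod_nonneg i hn.ne'
  have := Int.emod_lt_of_pos i hn
  rw [← hi k, hmod, periodize_apply_of_eq hz hcn (by omega) (by omega), add_assoc]

end Periodize

lemma mem_closure_of_forall_exists_eqOn {A : Type*} [TopologicalSpace A] [DiscreteTopology A]
    {Y : Set (ℤ → A)} {x : ℤ → A} (h : ∀ m : ℕ, ∃ p ∈ Y, ∀ i : ℤ, |i| < m → p i = x i) :
    x ∈ closure Y := by
  rw [mem_closure_iff_nhds]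
  intro U hU
  rw [nhds_pi, Filter.mem_pi] at hU
  obtain ⟨I, hI, t, ht, hIU⟩ := hU
  obtain ⟨b, hb⟩ := (hI.image Int.natAbs).bddAbove
  obtain ⟨p, hpY, hpx⟩ := h (b + 1)
  refine ⟨p, hIU fun i hi => ?_, hpY⟩
  have : i.natAbs ≤ b := hb (mem_image_of_mem _ hi)
  rw [hpx i (by rw [Int.abs_eq_natAbs]; omega)]
  exact mem_of_mem_nhds (ht i)

lemma IsMixing.subset_closure_periodicPts {A : Type*} [TopologicalSpace A] [DiscreteTopology A]
    {X : Set (ℤ → A)} (hsft : IsSFT X) (hmix : IsMixing X) :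
    X ⊆ closure (X ∩ periodicPts shiftMap) := by
  intro x hx
  obtain ⟨M, hM⟩ := hsft.exists_mem_of_forall_occursIn
  refine mem_closure_of_forall_exists_eqOn fun m => ?_
  obtain ⟨z, hz, j, n, hcn, hzx⟩ := hmix.exists_mem_eqOn_translates hx (m + M + 1)
  have hper : ∀ s : ℤ, -↑(m + M + 1) ≤ s → s < ↑(m + M + 1) → z (j + s + n) = z (j + s) :=
    fun s hs₁ hs₂ => (hzx s hs₁ hs₂).2.trans (hzx s hs₁ hs₂).1.symm
  have hmemX : periodize z j n ∈ X :=
    hM _ z hz fun w hw => occursIn_of_occursIn_periodize hper hcn (by omega)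
  have hperiodic : periodize z j n ∈ periodicPts shiftMap :=
    mk_mem_periodicPts (by omega) (isPeriodicPt_shiftMap_iff.mpr (periodize_periodic z j n))
  refine ⟨periodize z j n, ⟨hmemX, hperiodic⟩, fun i hi => ?_⟩
  obtain ⟨hi₁, hi₂⟩ := abs_lt.mp hi
  rw [periodize_apply_of_eq hper hcn (by omega) (by omega)]
  exact (hzx i (by omega) (by omega)).1

lemma Set.RightInvOn.continuousOn_of_isCompact {α β : Type*} [TopologicalSpace α]
    [TopologicalSpace β] [T2Space β] {f : α → β} {g : β → α} {s : Set α} {t : Set β}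
    (hgf : RightInvOn g f t) (hs : IsCompact s) (hf : ContinuousOn f s) (hinj : InjOn f s)
    (hg : MapsTo g t s) : ContinuousOn g t := by
  refine continuousOn_iff_isClosed.mpr fun C hC => ⟨f '' (C ∩ s), ?_, ?_⟩
  · exact ((hs.inter_left hC).image_of_continuousOn (hf.mono inter_subset_right)).isClosed
  ext y
  constructor
  · rintro ⟨hgy, hy⟩
    exact ⟨⟨g y, ⟨hgy, hg hy⟩, hgf hy⟩, hy⟩
  · rintro ⟨⟨x, ⟨hxC, hxs⟩, rfl⟩, hy⟩
    exact ⟨show g (f x) ∈ C by rwa [hinj (hg hy) hxs (hgf hy)], hy⟩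

section CellularAutomaton

variable {A : Type*} [TopologicalSpace A] {X : Set (ℤ → A)} {f : (ℤ → A) → (ℤ → A)}

lemma IsSubshift.mapsTo_shiftMap (hX : IsSubshift X) : MapsTo shiftMap X X :=
  fun _ hx => hX.2 ▸ mem_image_of_mem _ hx

lemma IsCAOn.apply_iterate_shiftMap (hf : IsCAOn X f) (hσ : MapsTo shiftMap X X) {x : ℤ → A}
    (hx : x ∈ X) (n : ℕ) : f (shiftMap^[n] x) = shiftMap^[n] (f x) := by
  induction n with
  | zero => rfl
  | succ n ih =>
    rw [iterate_succ_apply', iterate_succ_apply', hf.2.2 _ (hσ.iterate n hx), ih]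

lemma IsCAOn.mapsTo_setOf_isPeriodicPt (hf : IsCAOn X f) (hσ : MapsTo shiftMap X X) (n : ℕ) :
    MapsTo f {x ∈ X | IsPeriodicPt shiftMap n x} {x ∈ X | IsPeriodicPt shiftMap n x} :=
  fun x ⟨hx, hxn⟩ =>
    ⟨hf.1 hx, by rw [IsPeriodicPt, IsFixedPt, ← hf.apply_iterate_shiftMap hσ hx, hxn.eq]⟩

lemma IsCAOn.surjOn_of_injOn [Finite A] [T2Space A] (hXc : IsClosed X)
    (hσ : MapsTo shiftMap X X) (hdense : X ⊆ closure (X ∩ periodicPts shiftMap))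
    (hf : IsCAOn X f) (hinj : InjOn f X) : SurjOn f X X := by
  have hperiodic : X ∩ periodicPts shiftMap ⊆ f '' X := by
    rintro p ⟨hpX, n, hn, hpn⟩
    have hfin : {x ∈ X | IsPeriodicPt shiftMap n x}.Finite :=
      (finite_setOf_isPeriodicPt_shiftMap hn).subset fun _ hx => hx.2
    have hbij := (hfin.injOn_iff_bijOn_of_mapsTo (hf.mapsTo_setOf_isPeriodicPt hσ n)).mp
      (hinj.mono fun _ hx => hx.1)
    obtain ⟨q, hq, rfl⟩ := hbij.surjOn ⟨hpX, hpn⟩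
    exact mem_image_of_mem f hq.1
  have hclosed : IsClosed (f '' X) := (hXc.isCompact.image_of_continuousOn hf.2.1).isClosed
  exact hdense.trans (closure_minimal hperiodic hclosed)

lemma IsCAOn.exists_isCAOn_invOn [T2Space A] (hXc : IsCompact X) (hσ : MapsTo shiftMap X X)
    (hf : IsCAOn X f) (hbij : BijOn f X X) : ∃ g, IsCAOn X g ∧ InvOn g f X X := by
  rcases X.eq_empty_or_nonempty with rfl | ⟨x₀, -⟩
  · exact ⟨f, hf, by simp [InvOn, LeftInvOn, RightInvOn]⟩
  have : Nonempty (ℤ → A) := ⟨x₀⟩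
  have hinv := hbij.invOn_invFunOn
  have hmaps := hbij.surjOn.mapsTo_invFunOn
  refine ⟨invFunOn f X, ⟨hmaps, ?_, fun y hy => ?_⟩, hinv⟩
  · exact hinv.2.continuousOn_of_isCompact hXc hf.2.1 hbij.injOn hmaps
  · apply hbij.injOn (hmaps (hσ hy)) (hσ (hmaps hy))
    rw [hf.2.2 _ (hmaps hy), hinv.2 (hσ hy), hinv.2 hy]

end CellularAutomaton

/-- Let `X` be a mixing SFT and `f : X → X` a surjective cellular automaton.
Then `f` is injective if and only if `f` is von Neumann regular in `End(X)`. -/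
theorem stmt9 {A : Type*} [Finite A] [TopologicalSpace A] [DiscreteTopology A]
    (X : Set (ℤ → A)) (hX : IsSubshift X) (hXsft : IsSFT X) (hXmix : IsMixing X)
    (f : (ℤ → A) → (ℤ → A)) (hf : IsCAOn X f) (hsurj : f '' X = X) :
    Set.InjOn f X ↔ IsRegularCAOn X f := by
  have hσ := hX.mapsTo_shiftMap
  constructor
  · intro hinj
    obtain ⟨g, hg, hgf, hfg⟩ :=
      hf.exists_isCAOn_invOn hX.1.isCompact hσ ⟨hf.1, hinj, hsurj.superset⟩
    exact ⟨g, hg, fun x hx => by rw [hgf hx], fun y hy => by rw [hfg hy]⟩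
  · rintro ⟨h, hh, hfhf, -⟩
    have hfh : RightInvOn h f X := fun y hy => by
      obtain ⟨x, hx, rfl⟩ := hsurj.superset hy
      exact hfhf x hx
    have hhsurj : SurjOn h X X :=
      hh.surjOn_of_injOn hX.1 hσ (hXmix.subset_closure_periodicPts hXsft) hfh.injOn
    exact (hhsurj.leftInvOn_of_rightInvOn hfh).injOn
end
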